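/- arXiv:2505.22103 — 14 statements merged into one kernel-verified Lean document; each statement's English description precedes it below -/
import Mathlib

section
/- For all real μ > 1 and all positive reals σ₁, σ₂ and ω̃ > 0 satisfying σ₁ ≤ σ₂, the quantity ω̃(μ − 1)(σ₁ − σ₂) − σ₁σ₂ − 2μω̃² is strictly negative, and consequently the convergence factor ρ = sqrt( ((σ₁ − ω̃)² + ω̃²)/((σ₁ + μω̃)² + μ²ω̃²) · ((σ₂ − μω̃)² + μ²ω̃²)/((σ₂ + ω̃)² + ω̃²) ) satisfies ρ < 1. -/
theorem stmt_0 (μ σ₁ σ₂ ω : ℝ) (hμ : 1 < μ) (h1 : 0 < σ₁) (h2 : 0 < σ₂)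
    (hω : 0 < ω) (hσ : σ₁ ≤ σ₂) :
    ω * (μ - 1) * (σ₁ - σ₂) - σ₁ * σ₂ - 2 * μ * ω ^ 2 < 0 ∧
    Real.sqrt (((σ₁ - ω) ^ 2 + ω ^ 2) / ((σ₁ + μ * ω) ^ 2 + μ ^ 2 * ω ^ 2) *
      (((σ₂ - μ * ω) ^ 2 + μ ^ 2 * ω ^ 2) / ((σ₂ + ω) ^ 2 + ω ^ 2))) < 1 := by
  have hd1 : (0:ℝ) < (σ₁ + μ * ω) ^ 2 + μ ^ 2 * ω ^ 2 := by positivity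
  have hd2 : (0:ℝ) < (σ₂ + ω) ^ 2 + ω ^ 2 := by positivity
  have hA : ω * (μ - 1) * (σ₁ - σ₂) - σ₁ * σ₂ - 2 * μ * ω ^ 2 < 0 := by
    nlinarith [mul_pos hω (sub_pos.mpr hμ), mul_pos h1 h2, sq_nonneg ω,
      mul_pos hω hω]
  refine ⟨hA, ?_⟩
  have hlt : ((σ₁ - ω) ^ 2 + ω ^ 2) / ((σ₁ + μ * ω) ^ 2 + μ ^ 2 * ω ^ 2) *
      (((σ₂ - μ * ω) ^ 2 + μ ^ 2 * ω ^ 2) / ((σ₂ + ω) ^ 2 + ω ^ 2)) < 1 := by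
    rw [div_mul_div_comm, div_lt_one (by positivity)]
    nlinarith [mul_nonneg (mul_nonneg (sub_pos.mpr hμ).le hω.le)
        (sub_nonneg.mpr (pow_le_pow_left₀ h1.le hσ 2)),
      mul_pos (mul_pos hω h1) (mul_pos h1 h2),
      mul_pos (mul_pos hω h2) (mul_pos h1 h2),
      mul_pos (mul_pos (mul_pos hω hω) hω) h1,
      mul_pos (mul_pos (mul_pos hω hω) hω) h2,
      mul_pos (show (0:ℝ) < μ by linarith) hω,
      sq_nonneg (σ₁-σ₂), hμ, hω]
  calc Real.sqrt _ < Real.sqrt 1 := by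
        apply Real.sqrt_lt_sqrt (by positivity) hlt
    _ = 1 := Real.sqrt_one
end

section
/- For all positive reals σ₁, σ₂, ω̃ and μ > 0 with σ₁ > 0, the convergence factor satisfies ρ(ω̃, −σ₁, σ₂) > ρ(ω̃, σ₁, σ₂), where ρ(ω̃, a, b) = sqrt( ((a − ω̃)² + ω̃²)/((a + μω̃)² + μ²ω̃²) · ((b − μω̃)² + μ²ω̃²)/((b + ω̃)² + ω̃²) ), provided the denominators are nonzero. -/
theorem stmt_1 (μ σ₁ σ₂ ω : ℝ) (hμ : 0 < μ) (h1 : 0 < σ₁) (h2 : 0 < σ₂) (hω : 0 < ω)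
    (hden1 : (-σ₁ + μ * ω) ^ 2 + μ ^ 2 * ω ^ 2 ≠ 0)
    (hden2 : (σ₁ + μ * ω) ^ 2 + μ ^ 2 * ω ^ 2 ≠ 0)
    (hden3 : (σ₂ + ω) ^ 2 + ω ^ 2 ≠ 0) :
    Real.sqrt (((σ₁ - ω) ^ 2 + ω ^ 2) / ((σ₁ + μ * ω) ^ 2 + μ ^ 2 * ω ^ 2) *
        (((σ₂ - μ * ω) ^ 2 + μ ^ 2 * ω ^ 2) / ((σ₂ + ω) ^ 2 + ω ^ 2))) <
    Real.sqrt (((-σ₁ - ω) ^ 2 + ω ^ 2) / ((-σ₁ + μ * ω) ^ 2 + μ ^ 2 * ω ^ 2) *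
        (((σ₂ - μ * ω) ^ 2 + μ ^ 2 * ω ^ 2) / ((σ₂ + ω) ^ 2 + ω ^ 2))) := by
  have hμω : 0 < μ * ω := mul_pos hμ hω
  have hd1 : 0 < (-σ₁ + μ * ω) ^ 2 + μ ^ 2 * ω ^ 2 := by positivity
  have hd2 : 0 < (σ₁ + μ * ω) ^ 2 + μ ^ 2 * ω ^ 2 := by positivity
  have hd3 : 0 < (σ₂ + ω) ^ 2 + ω ^ 2 := by positivity
  have hC : 0 < ((σ₂ - μ * ω) ^ 2 + μ ^ 2 * ω ^ 2) / ((σ₂ + ω) ^ 2 + ω ^ 2) := by positivity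
  apply Real.sqrt_lt_sqrt (by positivity)
  apply mul_lt_mul_of_pos_right _ hC
  rw [div_lt_div_iff₀ hd2 hd1]
  nlinarith [sq_nonneg σ₁, sq_nonneg ω, sq_nonneg μ, mul_pos h1 hω, mul_pos hμ (mul_pos h1 hω),
    mul_pos (mul_pos h1 hω) (mul_pos h1 hω), sq_nonneg (σ₁ - ω), sq_nonneg (σ₁ + ω),
    mul_pos (mul_pos hμ hμ) (mul_pos (mul_pos h1 hω) (mul_pos hω hω))]
end

section
/- Let μ > 0 and ω̃ > 0, and define ρ(p) = sqrt( ((p − ω̃)² + ω̃²)/((p + μω̃)² + μ²ω̃²) · ((p − μω̃)² + μ²ω̃²)/((p + ω̃)² + ω̃²) ) for p > 0. Then the sign of dρ/dp equals the sign of (p² − 2μω̃²)·(p⁴ − 2p²(μ−1)²ω̃² + 4μ²ω̃⁴). -/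
set_option maxHeartbeats 2000000

lemma sign_pos_mul (c x : ℝ) (hc : 0 < c) : Real.sign (c * x) = Real.sign x := by
  rcases lt_trichotomy x 0 with h | h | h
  · rw [Real.sign_of_neg h, Real.sign_of_neg (mul_neg_of_pos_of_neg hc h)]
  · simp [h]
  · rw [Real.sign_of_pos h, Real.sign_of_pos (mul_pos hc h)]

theorem stmt_2 (μ ω : ℝ) (hμ : 0 < μ) (hω : 0 < ω) :
    ∀ p : ℝ, 0 < p →
      Real.sign (deriv (fun p : ℝ =>
        Real.sqrt (((p - ω) ^ 2 + ω ^ 2) / ((p + μ * ω) ^ 2 + μ ^ 2 * ω ^ 2) *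
          (((p - μ * ω) ^ 2 + μ ^ 2 * ω ^ 2) / ((p + ω) ^ 2 + ω ^ 2)))) p) =
      Real.sign ((p ^ 2 - 2 * μ * ω ^ 2) *
        (p ^ 4 - 2 * p ^ 2 * (μ - 1) ^ 2 * ω ^ 2 + 4 * μ ^ 2 * ω ^ 4)) := by
  intro p hp
  have hB1pos : (0:ℝ) < (p + μ * ω) ^ 2 + μ ^ 2 * ω ^ 2 := by positivity
  have hB2pos : (0:ℝ) < (p + ω) ^ 2 + ω ^ 2 := by positivity
  have hB1ne := hB1pos.ne'
  have hB2ne := hB2pos.ne'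
  have hgpos : (0:ℝ) < ((p - ω) ^ 2 + ω ^ 2) / ((p + μ * ω) ^ 2 + μ ^ 2 * ω ^ 2) *
      (((p - μ * ω) ^ 2 + μ ^ 2 * ω ^ 2) / ((p + ω) ^ 2 + ω ^ 2)) := by positivity
  have hA1 : HasDerivAt (fun q : ℝ => (q - ω) ^ 2 + ω ^ 2) (2 * (p - ω)) p := by
    have := (((hasDerivAt_id p).sub_const ω).pow 2).add_const (ω ^ 2)
    simpa using this
  have hA2 : HasDerivAt (fun q : ℝ => (q - μ * ω) ^ 2 + μ ^ 2 * ω ^ 2)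
      (2 * (p - μ * ω)) p := by
    have := (((hasDerivAt_id p).sub_const (μ * ω)).pow 2).add_const (μ ^ 2 * ω ^ 2)
    simpa using this
  have hB1 : HasDerivAt (fun q : ℝ => (q + μ * ω) ^ 2 + μ ^ 2 * ω ^ 2)
      (2 * (p + μ * ω)) p := by
    have := (((hasDerivAt_id p).add_const (μ * ω)).pow 2).add_const (μ ^ 2 * ω ^ 2)
    simpa using this
  have hB2 : HasDerivAt (fun q : ℝ => (q + ω) ^ 2 + ω ^ 2) (2 * (p + ω)) p := by
    have := (((hasDerivAt_id p).add_const ω).pow 2).add_const (ω ^ 2)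
    simpa using this
  have hg := (hA1.div hB1 hB1ne).mul (hA2.div hB2 hB2ne)
  have hsq := hg.sqrt hgpos.ne'
  erw [hsq.deriv]
  simp only [Pi.div_apply, Pi.mul_apply]
  set S := Real.sqrt (((p - ω) ^ 2 + ω ^ 2) / ((p + μ * ω) ^ 2 + μ ^ 2 * ω ^ 2) *
      (((p - μ * ω) ^ 2 + μ ^ 2 * ω ^ 2) / ((p + ω) ^ 2 + ω ^ 2))) with hS
  have hSpos : 0 < S := Real.sqrt_pos.mpr hgpos
  set T : ℝ := (p ^ 2 - 2 * μ * ω ^ 2) *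
      (p ^ 4 - 2 * p ^ 2 * (μ - 1) ^ 2 * ω ^ 2 + 4 * μ ^ 2 * ω ^ 4) with hT
  set Q : ℝ := (((p + μ * ω) ^ 2 + μ ^ 2 * ω ^ 2) * ((p + ω) ^ 2 + ω ^ 2)) ^ 2 with hQ
  have hQpos : 0 < Q := by positivity
  have key : (2 * (p - ω) * ((p + μ * ω) ^ 2 + μ ^ 2 * ω ^ 2) -
        ((p - ω) ^ 2 + ω ^ 2) * (2 * (p + μ * ω))) /
        ((p + μ * ω) ^ 2 + μ ^ 2 * ω ^ 2) ^ 2 *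
        (((p - μ * ω) ^ 2 + μ ^ 2 * ω ^ 2) / ((p + ω) ^ 2 + ω ^ 2)) +
        ((p - ω) ^ 2 + ω ^ 2) / ((p + μ * ω) ^ 2 + μ ^ 2 * ω ^ 2) *
        ((2 * (p - μ * ω) * ((p + ω) ^ 2 + ω ^ 2) -
          ((p - μ * ω) ^ 2 + μ ^ 2 * ω ^ 2) * (2 * (p + ω))) /
          ((p + ω) ^ 2 + ω ^ 2) ^ 2) = (4 * ω * (μ + 1) * T) / Q := by
    rw [hT, hQ]
    field_simp
    ring
  rw [key]
  have h2 : 4 * ω * (μ + 1) * T / Q / (2 * S) = (2 * ω * (μ + 1) / (Q * S)) * T := by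
    field_simp
    ring
  rw [h2, sign_pos_mul _ _ (by positivity)]
end

section
/- Let 1 < μ ≤ 2 + √3 and ω̃ > 0. Then for all p > 0, the polynomial p⁴ − 2p²(μ−1)²ω̃² + 4μ²ω̃⁴ is nonnegative. -/
theorem stmt_4 (μ ω : ℝ) (hμ1 : 1 < μ) (hμ2 : μ ≤ 2 + Real.sqrt 3) (hω : 0 < ω) :
    ∀ p : ℝ, 0 < p →
      0 ≤ p ^ 4 - 2 * p ^ 2 * (μ - 1) ^ 2 * ω ^ 2 + 4 * μ ^ 2 * ω ^ 4 := by
  intro p hp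
  have h3 : Real.sqrt 3 ^ 2 = 3 := Real.sq_sqrt (by norm_num)
  have hs : (0:ℝ) ≤ Real.sqrt 3 := Real.sqrt_nonneg 3
  have hs1 : (1:ℝ) ≤ Real.sqrt 3 := by nlinarith
  have hkey : μ ^ 2 - 4 * μ + 1 ≤ 0 := by
    nlinarith [mul_nonneg (by linarith : (0:ℝ) ≤ 2 + Real.sqrt 3 - μ)
      (by linarith : (0:ℝ) ≤ μ - 2 + Real.sqrt 3)]
  nlinarith [sq_nonneg (p ^ 2 - (μ - 1) ^ 2 * ω ^ 2), sq_nonneg ω, sq_nonneg p,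
    sq_nonneg (ω ^ 2),
    mul_nonneg (mul_nonneg (neg_nonneg.mpr hkey) (by nlinarith : (0:ℝ) ≤ 2 * μ + (μ - 1) ^ 2)) (sq_nonneg (ω ^ 2))]
end

section
/- Let μ > 2 + √3, ω̃ > 0, and set δ = sqrt((μ² − 4μ + 1)(μ² + 1)). Then the polynomial q(p) = p⁴ − 2p²(μ−1)²ω̃² + 4μ²ω̃⁴ satisfies: q(p) > 0 for 0 < p² < ω̃²((μ−1)² − δ), q(p) < 0 for ω̃²((μ−1)² − δ) < p² < ω̃²((μ−1)² + δ), and q(p) > 0 for p² > ω̃²((μ−1)² + δ). Moreover both roots ω̃²((μ−1)² ± δ) are positive, and 2μω̃² lies strictly between them. -/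
theorem stmt_5 (μ ω : ℝ) (hμ : 2 + Real.sqrt 3 < μ) (hω : 0 < ω)
    (δ : ℝ) (hδ : δ = Real.sqrt ((μ ^ 2 - 4 * μ + 1) * (μ ^ 2 + 1))) :
    (∀ p : ℝ, 0 < p ^ 2 → p ^ 2 < ω ^ 2 * ((μ - 1) ^ 2 - δ) →
        0 < p ^ 4 - 2 * p ^ 2 * (μ - 1) ^ 2 * ω ^ 2 + 4 * μ ^ 2 * ω ^ 4) ∧
    (∀ p : ℝ, ω ^ 2 * ((μ - 1) ^ 2 - δ) < p ^ 2 → p ^ 2 < ω ^ 2 * ((μ - 1) ^ 2 + δ) →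
        p ^ 4 - 2 * p ^ 2 * (μ - 1) ^ 2 * ω ^ 2 + 4 * μ ^ 2 * ω ^ 4 < 0) ∧
    (∀ p : ℝ, ω ^ 2 * ((μ - 1) ^ 2 + δ) < p ^ 2 →
        0 < p ^ 4 - 2 * p ^ 2 * (μ - 1) ^ 2 * ω ^ 2 + 4 * μ ^ 2 * ω ^ 4) ∧
    (0 < ω ^ 2 * ((μ - 1) ^ 2 - δ) ∧ 0 < ω ^ 2 * ((μ - 1) ^ 2 + δ)) ∧
    (ω ^ 2 * ((μ - 1) ^ 2 - δ) < 2 * μ * ω ^ 2 ∧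
      2 * μ * ω ^ 2 < ω ^ 2 * ((μ - 1) ^ 2 + δ)) := by
  have h3 : Real.sqrt 3 ^ 2 = 3 := Real.sq_sqrt (by norm_num)
  have h3n : (0:ℝ) ≤ Real.sqrt 3 := Real.sqrt_nonneg 3
  have hμ0 : 2 < μ := by nlinarith
  have hA : 0 < μ ^ 2 - 4 * μ + 1 := by nlinarith
  have hδ2 : δ ^ 2 = (μ ^ 2 - 4 * μ + 1) * (μ ^ 2 + 1) := by
    rw [hδ]; exact Real.sq_sqrt (by positivity)
  have hδpos : 0 < δ := by rw [hδ]; positivity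
  have hδlt : δ < (μ - 1) ^ 2 := by nlinarith [hδ2, hδpos, hμ0]
  have hω2 : 0 < ω ^ 2 := by positivity
  have hkey : ω ^ 2 * ((μ - 1) ^ 2 - δ) * (ω ^ 2 * ((μ - 1) ^ 2 + δ)) = 4 * μ ^ 2 * ω ^ 4 := by
    linear_combination (-ω ^ 4) * hδ2
  have hc : μ ^ 2 - 4 * μ + 1 < δ := by nlinarith [hδ2, hδpos, hA, hμ0]
  refine ⟨?_, ?_, ?_, ⟨?_, ?_⟩, ?_, ?_⟩
  · intro p hp hlt
    have h2 : p ^ 2 < ω ^ 2 * ((μ - 1) ^ 2 + δ) := by nlinarith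
    nlinarith [mul_pos (sub_pos.2 hlt) (sub_pos.2 h2), hkey]
  · intro p h1 h2
    nlinarith [mul_pos (sub_pos.2 h1) (sub_pos.2 h2), hkey]
  · intro p h2
    have h1 : ω ^ 2 * ((μ - 1) ^ 2 - δ) < p ^ 2 := by nlinarith
    nlinarith [mul_pos (sub_pos.2 h1) (sub_pos.2 h2), hkey]
  · nlinarith
  · nlinarith
  · nlinarith
  · nlinarith
end

section
/- Let 1 < μ ≤ 2 + √3 and 0 < ω̃₁ < ω̃₂. Define ρ(ω̃, p) = sqrt( ((p−ω̃)²+ω̃²)/((p+μω̃)²+μ²ω̃²) · ((p−μω̃)²+μ²ω̃²)/((p+ω̃)²+ω̃²) ). Then for p* = sqrt(2μ ω̃₁ ω̃₂) one has the equioscillation property ρ(ω̃₁, p*) = ρ(ω̃₂, p*). -/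
theorem stmt_6 (μ ω₁ ω₂ : ℝ) (hμ1 : 1 < μ) (hμ2 : μ ≤ 2 + Real.sqrt 3)
    (h1 : 0 < ω₁) (h12 : ω₁ < ω₂) :
    (fun ω p : ℝ =>
      Real.sqrt (((p - ω) ^ 2 + ω ^ 2) / ((p + μ * ω) ^ 2 + μ ^ 2 * ω ^ 2) *
        (((p - μ * ω) ^ 2 + μ ^ 2 * ω ^ 2) / ((p + ω) ^ 2 + ω ^ 2))))
      ω₁ (Real.sqrt (2 * μ * ω₁ * ω₂)) =
    (fun ω p : ℝ =>
      Real.sqrt (((p - ω) ^ 2 + ω ^ 2) / ((p + μ * ω) ^ 2 + μ ^ 2 * ω ^ 2) *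
        (((p - μ * ω) ^ 2 + μ ^ 2 * ω ^ 2) / ((p + ω) ^ 2 + ω ^ 2))))
      ω₂ (Real.sqrt (2 * μ * ω₁ * ω₂)) := by
  simp only
  set p := Real.sqrt (2 * μ * ω₁ * ω₂) with hpdef
  have h2 : (0:ℝ) < ω₂ := h1.trans h12
  have hμ0 : (0:ℝ) < μ := by linarith
  have hp : p ^ 2 = 2 * μ * ω₁ * ω₂ := Real.sq_sqrt (by positivity)
  congr 1
  have d1 : ((p + μ * ω₁) ^ 2 + μ ^ 2 * ω₁ ^ 2) ≠ 0 := by positivity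
  have d2 : ((p + ω₁) ^ 2 + ω₁ ^ 2) ≠ 0 := by positivity
  have d3 : ((p + μ * ω₂) ^ 2 + μ ^ 2 * ω₂ ^ 2) ≠ 0 := by positivity
  have d4 : ((p + ω₂) ^ 2 + ω₂ ^ 2) ≠ 0 := by positivity
  field_simp
  linear_combination (16*p*μ^2*ω₁^2*ω₂^3 - 16*p*μ^2*ω₁^3*ω₂^2 + 16*p*μ^3*ω₁^2*ω₂^3
    - 16*p*μ^3*ω₁^3*ω₂^2 - 8*p^3*ω₁*ω₂^2 + 8*p^3*ω₁^2*ω₂ + 8*p^3*μ*ω₂^3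
    - 16*p^3*μ*ω₁*ω₂^2 + 16*p^3*μ*ω₁^2*ω₂ - 8*p^3*μ*ω₁^3 + 8*p^3*μ^2*ω₂^3
    - 16*p^3*μ^2*ω₁*ω₂^2 + 16*p^3*μ^2*ω₁^2*ω₂ - 8*p^3*μ^2*ω₁^3
    - 8*p^3*μ^3*ω₁*ω₂^2 + 8*p^3*μ^3*ω₁^2*ω₂ + 4*p^5*ω₂ - 4*p^5*ω₁
    + 4*p^5*μ*ω₂ - 4*p^5*μ*ω₁) * hp
end

section
/- Let 1 < μ ≤ 2 + √3 and 0 < ω̃₁ < ω̃₂, and let ρ(ω̃, p) be as in Version I. For each fixed p ∈ [√(2μ)ω̃₁, √(2μ)ω̃₂], the maximum of ρ(ω̃, p) over ω̃ ∈ [ω̃₁, ω̃₂] equals max{ρ(ω̃₁, p), ρ(ω̃₂, p)}. -/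
/-- Key comparison: if `0 ≤ (b-a)(p² - 2μab)` then `ρ²(b) ≤ ρ²(a)`. -/
lemma key_cmp (μ p a b : ℝ) (ha : 0 < a) (hb : 0 < b) (hp : 0 < p) (hμ1 : 1 < μ)
    (hμq : μ ^ 2 - 4 * μ + 1 ≤ 0)
    (hsign : 0 ≤ (b - a) * (p ^ 2 - 2 * μ * a * b)) :
    ((p - b) ^ 2 + b ^ 2) / ((p + μ * b) ^ 2 + μ ^ 2 * b ^ 2) *
      (((p - μ * b) ^ 2 + μ ^ 2 * b ^ 2) / ((p + b) ^ 2 + b ^ 2)) ≤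
    ((p - a) ^ 2 + a ^ 2) / ((p + μ * a) ^ 2 + μ ^ 2 * a ^ 2) *
      (((p - μ * a) ^ 2 + μ ^ 2 * a ^ 2) / ((p + a) ^ 2 + a ^ 2)) := by
  have hμ0 : 0 < μ := by linarith
  have hDb : 0 < ((p + μ * b) ^ 2 + μ ^ 2 * b ^ 2) * ((p + b) ^ 2 + b ^ 2) := by positivity
  have hDa : 0 < ((p + μ * a) ^ 2 + μ ^ 2 * a ^ 2) * ((p + a) ^ 2 + a ^ 2) := by positivity
  rw [div_mul_div_comm, div_mul_div_comm, div_le_div_iff₀ hDb hDa]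
  have h4 : 0 ≤ 4 * μ - μ ^ 2 - 1 := by linarith
  have hR : 0 ≤ (p ^ 2 - 2 * μ * a * b) ^ 2 + 2 * μ * p ^ 2 * (a - b) ^ 2 +
      2 * p ^ 2 * (a * b) * (4 * μ - μ ^ 2 - 1) := by positivity
  have hfac : 0 ≤ 4 * p * (μ + 1) * ((b - a) * (p ^ 2 - 2 * μ * a * b)) *
      ((p ^ 2 - 2 * μ * a * b) ^ 2 + 2 * μ * p ^ 2 * (a - b) ^ 2 +
        2 * p ^ 2 * (a * b) * (4 * μ - μ ^ 2 - 1)) := by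
    apply mul_nonneg (mul_nonneg (by positivity) hsign) hR
  nlinarith [hfac, sq_nonneg p]

theorem stmt_7 (μ ω₁ ω₂ p : ℝ) (hμ1 : 1 < μ) (hμ2 : μ ≤ 2 + Real.sqrt 3)
    (h1 : 0 < ω₁) (h12 : ω₁ < ω₂)
    (hp1 : Real.sqrt (2 * μ) * ω₁ ≤ p) (hp2 : p ≤ Real.sqrt (2 * μ) * ω₂) :
    ∀ ω ∈ Set.Icc ω₁ ω₂,
      Real.sqrt (((p - ω) ^ 2 + ω ^ 2) / ((p + μ * ω) ^ 2 + μ ^ 2 * ω ^ 2) *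
        (((p - μ * ω) ^ 2 + μ ^ 2 * ω ^ 2) / ((p + ω) ^ 2 + ω ^ 2))) ≤
      max
        (Real.sqrt (((p - ω₁) ^ 2 + ω₁ ^ 2) / ((p + μ * ω₁) ^ 2 + μ ^ 2 * ω₁ ^ 2) *
          (((p - μ * ω₁) ^ 2 + μ ^ 2 * ω₁ ^ 2) / ((p + ω₁) ^ 2 + ω₁ ^ 2))))
        (Real.sqrt (((p - ω₂) ^ 2 + ω₂ ^ 2) / ((p + μ * ω₂) ^ 2 + μ ^ 2 * ω₂ ^ 2) *
          (((p - μ * ω₂) ^ 2 + μ ^ 2 * ω₂ ^ 2) / ((p + ω₂) ^ 2 + ω₂ ^ 2)))) := by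
  intro ω hω
  obtain ⟨hω1, hω2⟩ := hω
  have hω0 : 0 < ω := lt_of_lt_of_le h1 hω1
  have h2μ : 0 < Real.sqrt (2 * μ) := Real.sqrt_pos.mpr (by linarith)
  have hp : 0 < p := lt_of_lt_of_le (by positivity) hp1
  have h3 : Real.sqrt 3 ^ 2 = 3 := Real.sq_sqrt (by norm_num)
  have hs1 : (1 : ℝ) ≤ Real.sqrt 3 := by
    nlinarith [Real.sqrt_nonneg 3, h3]
  have hμq : μ ^ 2 - 4 * μ + 1 ≤ 0 := by
    nlinarith [h3, hs1, mul_nonneg (sub_nonneg.2 hμ2) (show (0:ℝ) ≤ μ - 2 + Real.sqrt 3 by nlinarith)]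
  rcases le_or_gt (2 * μ * ω ^ 2) (p ^ 2) with hcase | hcase
  · -- compare with left endpoint
    refine le_trans (Real.sqrt_le_sqrt ?_) (le_max_left _ _)
    apply key_cmp μ p ω₁ ω h1 hω0 hp hμ1 hμq
    apply mul_nonneg (by linarith)
    nlinarith [mul_le_mul_of_nonneg_left (mul_le_mul_of_nonneg_right hω1 hω0.le) (show (0:ℝ) ≤ μ by linarith)]
  · -- compare with right endpoint
    refine le_trans (Real.sqrt_le_sqrt ?_) (le_max_right _ _)
    apply key_cmp μ p ω₂ ω (lt_trans h1 h12) hω0 hp hμ1 hμq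
    nlinarith [mul_nonneg (sub_nonneg.2 hω2) (show (0:ℝ) ≤ 2 * μ * ω₂ * ω - p ^ 2 by
      nlinarith [mul_le_mul_of_nonneg_left (mul_le_mul_of_nonneg_right hω2 hω0.le) (show (0:ℝ) ≤ μ by linarith)])]
end

section
/- Let μ > 1, 0 < ω̃₁ < ω̃₂, and define ρ(ω̃, p) as the Version I convergence factor. The equation ρ(ω̃₁, p) = ρ(ω̃₂, p) for p > 0 is equivalent to (p² − 2μω̃₁ω̃₂)·(p⁴/2 + (μω̃₂ − ω̃₁)(ω̃₂ − μω̃₁)p² + 2μ²ω̃₁²ω̃₂²) = 0. -/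
theorem stmt_8 (μ ω₁ ω₂ : ℝ) (hμ : 1 < μ) (h1 : 0 < ω₁) (h12 : ω₁ < ω₂) :
    ∀ p : ℝ, 0 < p →
      (Real.sqrt (((p - ω₁) ^ 2 + ω₁ ^ 2) / ((p + μ * ω₁) ^ 2 + μ ^ 2 * ω₁ ^ 2) *
          (((p - μ * ω₁) ^ 2 + μ ^ 2 * ω₁ ^ 2) / ((p + ω₁) ^ 2 + ω₁ ^ 2))) =
        Real.sqrt (((p - ω₂) ^ 2 + ω₂ ^ 2) / ((p + μ * ω₂) ^ 2 + μ ^ 2 * ω₂ ^ 2) *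
          (((p - μ * ω₂) ^ 2 + μ ^ 2 * ω₂ ^ 2) / ((p + ω₂) ^ 2 + ω₂ ^ 2))) ↔
        (p ^ 2 - 2 * μ * ω₁ * ω₂) *
          (p ^ 4 / 2 + (μ * ω₂ - ω₁) * (ω₂ - μ * ω₁) * p ^ 2 +
            2 * μ ^ 2 * ω₁ ^ 2 * ω₂ ^ 2) = 0) := by
  intro p hp
  have h2 : 0 < ω₂ := h1.trans h12
  have hμ0 : 0 < μ := lt_trans one_pos hμ
  have hd1 : 0 < ((p + μ * ω₁) ^ 2 + μ ^ 2 * ω₁ ^ 2) := by positivity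
  have hd2 : 0 < ((p + ω₁) ^ 2 + ω₁ ^ 2) := by positivity
  have hd3 : 0 < ((p + μ * ω₂) ^ 2 + μ ^ 2 * ω₂ ^ 2) := by positivity
  have hd4 : 0 < ((p + ω₂) ^ 2 + ω₂ ^ 2) := by positivity
  rw [Real.sqrt_inj (by positivity) (by positivity), div_mul_div_comm,
    div_mul_div_comm, div_eq_div_iff (by positivity) (by positivity)]
  constructor
  · intro h
    have hc : (8 * p * (μ + 1) * (ω₂ - ω₁)) ≠ 0 := by
      have : 0 < ω₂ - ω₁ := sub_pos.mpr h12
      positivity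
    have hkey : 8 * p * (μ + 1) * (ω₂ - ω₁) *
        ((p ^ 2 - 2 * μ * ω₁ * ω₂) *
          (p ^ 4 / 2 + (μ * ω₂ - ω₁) * (ω₂ - μ * ω₁) * p ^ 2 +
            2 * μ ^ 2 * ω₁ ^ 2 * ω₂ ^ 2)) = 0 := by linear_combination h
    exact (mul_eq_zero.mp hkey).resolve_left hc
  · intro h
    linear_combination (8 * p * (μ + 1) * (ω₂ - ω₁)) * h
end

section
/- Let μ > 2 + √3 and 0 < ω̃₁ < ω̃₂ with kᵣ := ω̃₂/ω̃₁. The quartic p⁴/2 + (μω̃₂ − ω̃₁)(ω̃₂ − μω̃₁)p² + 2μ²ω̃₁²ω̃₂² has a positive real root if and only if kᵣ ≤ h₂(μ) := ((μ−1)² + δ)/(2μ), where δ = sqrt((μ²−4μ+1)(μ²+1)). -/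
theorem stmt_9 (μ ω₁ ω₂ : ℝ) (hμ : 2 + Real.sqrt 3 < μ) (h1 : 0 < ω₁) (h12 : ω₁ < ω₂) :
    (∃ p : ℝ, 0 < p ∧
        p ^ 4 / 2 + (μ * ω₂ - ω₁) * (ω₂ - μ * ω₁) * p ^ 2 +
          2 * μ ^ 2 * ω₁ ^ 2 * ω₂ ^ 2 = 0) ↔
      ω₂ / ω₁ ≤ ((μ - 1) ^ 2 + Real.sqrt ((μ ^ 2 - 4 * μ + 1) * (μ ^ 2 + 1))) / (2 * μ) := by
  have h3 : Real.sqrt 3 ^ 2 = 3 := Real.sq_sqrt (by norm_num)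
  have hs3 : 0 ≤ Real.sqrt 3 := Real.sqrt_nonneg _
  have hquad : 0 < μ ^ 2 - 4 * μ + 1 := by nlinarith
  have hμ0 : 0 < μ := by nlinarith
  have hD : 0 ≤ (μ ^ 2 - 4 * μ + 1) * (μ ^ 2 + 1) := by positivity
  set δ := Real.sqrt ((μ ^ 2 - 4 * μ + 1) * (μ ^ 2 + 1)) with hδdef
  have hδ2 : δ ^ 2 = (μ ^ 2 - 4 * μ + 1) * (μ ^ 2 + 1) := Real.sq_sqrt hD
  have hδ0 : 0 ≤ δ := Real.sqrt_nonneg _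
  have hδgt : μ ^ 2 - 4 * μ + 1 < δ := by nlinarith
  have h2 : 0 < ω₂ := h1.trans h12
  have hω12 : 0 < μ * ω₁ * ω₂ := by positivity
  have key : (μ * ω₂ ^ 2 - (μ - 1) ^ 2 * ω₁ * ω₂ + μ * ω₁ ^ 2 ≤ 0) ↔
      ω₂ / ω₁ ≤ ((μ - 1) ^ 2 + δ) / (2 * μ) := by
    rw [div_le_div_iff₀ h1 (by positivity)]
    constructor
    · intro hg
      nlinarith [mul_nonneg hδ0 h1.le, sq_nonneg (2 * μ * ω₂ - (μ - 1) ^ 2 * ω₁),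
        mul_nonpos_of_nonneg_of_nonpos hμ0.le hg, hδ2]
    · intro hle
      have ht1 : 2 * μ * ω₂ - (μ - 1) ^ 2 * ω₁ ≤ δ * ω₁ := by nlinarith
      have ht2 : -(δ * ω₁) ≤ 2 * μ * ω₂ - (μ - 1) ^ 2 * ω₁ := by nlinarith
      nlinarith [mul_nonneg (by linarith : (0:ℝ) ≤ δ * ω₁ - (2 * μ * ω₂ - (μ - 1) ^ 2 * ω₁))
        (by linarith : (0:ℝ) ≤ δ * ω₁ + (2 * μ * ω₂ - (μ - 1) ^ 2 * ω₁)), sq_nonneg ω₁, hμ0]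
  constructor
  · rintro ⟨p, hp, hroot⟩
    rw [← key]
    have hq2 : 0 < p ^ 2 := by positivity
    nlinarith [sq_nonneg (p ^ 2 - 2 * μ * ω₁ * ω₂), hroot, hq2, hω12]
  · intro hle
    rw [← key] at hle
    set B := (μ * ω₂ - ω₁) * (ω₂ - μ * ω₁) with hB
    have hB' : B ≤ -(2 * μ * ω₁ * ω₂) := by rw [hB]; nlinarith
    have hBneg : B < 0 := lt_of_le_of_lt hB' (by linarith)
    have hdisc : 0 ≤ B ^ 2 - 4 * μ ^ 2 * ω₁ ^ 2 * ω₂ ^ 2 := by nlinarith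
    set s := Real.sqrt (B ^ 2 - 4 * μ ^ 2 * ω₁ ^ 2 * ω₂ ^ 2) with hs
    have hs2 : s ^ 2 = B ^ 2 - 4 * μ ^ 2 * ω₁ ^ 2 * ω₂ ^ 2 := Real.sq_sqrt hdisc
    have hs0 : 0 ≤ s := Real.sqrt_nonneg _
    have hq0 : 0 < -B + s := by linarith
    refine ⟨Real.sqrt (-B + s), Real.sqrt_pos.2 hq0, ?_⟩
    have hps : Real.sqrt (-B + s) ^ 2 = -B + s := Real.sq_sqrt hq0.le
    have h4 : Real.sqrt (-B + s) ^ 4 = (-B + s) ^ 2 := by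
      rw [show (4 : ℕ) = 2 * 2 from rfl, pow_mul, hps]
    rw [h4, hps]
    linear_combination hs2 / 2
end

section
/- Let μ > 2 + √3 and define h₁(μ) = (μ² + 1 + sqrt((μ² − 4μ + 1)(μ² + 4μ + 1)))/(4μ) and h₂(μ) = ((μ−1)² + δ)/(2μ) with δ = sqrt((μ² − 4μ + 1)(μ² + 1)). Then h₂(μ) > h₁(μ) > 1. -/
theorem stmt_10 (μ : ℝ) (hμ : 2 + Real.sqrt 3 < μ) :
    ((μ - 1) ^ 2 + Real.sqrt ((μ ^ 2 - 4 * μ + 1) * (μ ^ 2 + 1))) / (2 * μ) >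
      (μ ^ 2 + 1 + Real.sqrt ((μ ^ 2 - 4 * μ + 1) * (μ ^ 2 + 4 * μ + 1))) / (4 * μ) ∧
    (μ ^ 2 + 1 + Real.sqrt ((μ ^ 2 - 4 * μ + 1) * (μ ^ 2 + 4 * μ + 1))) / (4 * μ) > 1 := by
  have hs3 : Real.sqrt 3 ^ 2 = 3 := Real.sq_sqrt (by norm_num)
  have hs3nn : 0 ≤ Real.sqrt 3 := Real.sqrt_nonneg 3
  have hμpos : 0 < μ := by nlinarith
  have hP : 0 < μ ^ 2 - 4 * μ + 1 := by nlinarith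
  set δ := Real.sqrt ((μ ^ 2 - 4 * μ + 1) * (μ ^ 2 + 1)) with hδdef
  set a := Real.sqrt ((μ ^ 2 - 4 * μ + 1) * (μ ^ 2 + 4 * μ + 1)) with hadef
  have hδnn : 0 ≤ δ := Real.sqrt_nonneg _
  have hann : 0 ≤ a := Real.sqrt_nonneg _
  have hδsq : δ ^ 2 = (μ ^ 2 - 4 * μ + 1) * (μ ^ 2 + 1) :=
    Real.sq_sqrt (by positivity)
  have key : a < (μ ^ 2 - 4 * μ + 1) + 2 * δ := by
    rw [hadef, show ((μ ^ 2 - 4 * μ + 1) + 2 * δ) = ((μ ^ 2 - 4 * μ + 1) + 2 * δ) from rfl]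
    have hpos : 0 < (μ ^ 2 - 4 * μ + 1) + 2 * δ := by positivity
    rw [show (Real.sqrt ((μ ^ 2 - 4 * μ + 1) * (μ ^ 2 + 4 * μ + 1)) <
        (μ ^ 2 - 4 * μ + 1) + 2 * δ) ↔ _ from Real.sqrt_lt' hpos]
    nlinarith [hδsq, mul_nonneg hP.le hδnn, mul_pos hP (show (0:ℝ) < (μ - 1) ^ 2 by nlinarith)]
  constructor
  · rw [gt_iff_lt, div_lt_div_iff₀ (by positivity) (by positivity)]
    nlinarith
  · rw [gt_iff_lt, lt_div_iff₀ (by positivity)]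
    nlinarith
end

section
/- Let μ > 2 + √3 and kᵣ > 1, and define R_c = sqrt( ((√(2μ)−1)²+1)/((√2+√μ)²+μ) · ((√2−√μ)²+μ)/((√(2μ)+1)²+1) ) and R_ext(kᵣ) = sqrt( ((√(2μ)kᵣ−1)²+1)/((√2 kᵣ+√μ)²+μ) · ((√2 kᵣ−√μ)²+μ)/((√(2μ)kᵣ+1)²+1) ). If kᵣ > h₁(μ) := (μ²+1+sqrt((μ²−4μ+1)(μ²+4μ+1)))/(4μ), then R_ext(kᵣ) > R_c. -/
theorem stmt_11 (μ k : ℝ) (hμ : 2 + Real.sqrt 3 < μ) (hk : 1 < k)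
    (hk1 : k > (μ ^ 2 + 1 + Real.sqrt ((μ ^ 2 - 4 * μ + 1) * (μ ^ 2 + 4 * μ + 1))) / (4 * μ)) :
    Real.sqrt (((Real.sqrt (2 * μ) * k - 1) ^ 2 + 1) / ((Real.sqrt 2 * k + Real.sqrt μ) ^ 2 + μ) *
        (((Real.sqrt 2 * k - Real.sqrt μ) ^ 2 + μ) / ((Real.sqrt (2 * μ) * k + 1) ^ 2 + 1))) >
    Real.sqrt (((Real.sqrt (2 * μ) - 1) ^ 2 + 1) / ((Real.sqrt 2 + Real.sqrt μ) ^ 2 + μ) *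
        (((Real.sqrt 2 - Real.sqrt μ) ^ 2 + μ) / ((Real.sqrt (2 * μ) + 1) ^ 2 + 1))) := by
  have h3 : (0:ℝ) ≤ Real.sqrt 3 := Real.sqrt_nonneg 3
  have h3' : Real.sqrt 3 ^ 2 = 3 := Real.sq_sqrt (by norm_num)
  have h3lb : (1:ℝ) ≤ Real.sqrt 3 := by nlinarith
  have hμ0 : 0 < μ := by linarith
  -- μ² - 4μ + 1 > 0 since μ > 2 + √3
  have hquad : 0 < μ ^ 2 - 4 * μ + 1 := by nlinarith
  have hquad2 : 0 < μ ^ 2 + 4 * μ + 1 := by nlinarith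
  set D := Real.sqrt ((μ ^ 2 - 4 * μ + 1) * (μ ^ 2 + 4 * μ + 1)) with hDdef
  have hD0 : 0 ≤ D := Real.sqrt_nonneg _
  have hD2 : D ^ 2 = (μ ^ 2 - 4 * μ + 1) * (μ ^ 2 + 4 * μ + 1) :=
    Real.sq_sqrt (by positivity)
  have hkD : 4 * μ * k > μ ^ 2 + 1 + D := by
    have h4μ : 0 < 4 * μ := by linarith
    calc μ ^ 2 + 1 + D = (μ ^ 2 + 1 + D) / (4 * μ) * (4 * μ) := by field_simp
    _ < k * (4 * μ) := by exact mul_lt_mul_of_pos_right hk1 h4μ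
    _ = 4 * μ * k := by ring
  -- key positivity: 2μk² - (μ²+1)k + 2μ > 0
  have hposμ : 0 < 2 * μ * k ^ 2 - (μ ^ 2 + 1) * k + 2 * μ := by
    have h1 : 4 * μ * k - (μ ^ 2 + 1) > D := by linarith
    have h2 : (4 * μ * k - (μ ^ 2 + 1)) ^ 2 > D ^ 2 := by nlinarith
    rw [hD2] at h2
    nlinarith
  set a := Real.sqrt 2 with hadef
  set b := Real.sqrt μ with hbdef
  have ha : a ^ 2 = 2 := Real.sq_sqrt (by norm_num)
  have hb : b ^ 2 = μ := Real.sq_sqrt hμ0.le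
  have ha0 : 0 < a := Real.sqrt_pos.mpr (by norm_num)
  have hb0 : 0 < b := Real.sqrt_pos.mpr hμ0
  have hab : Real.sqrt (2 * μ) = a * b := Real.sqrt_mul (by norm_num) μ
  rw [hab, ← hb]
  have hpos : 0 < 2 * b ^ 2 * k ^ 2 - (b ^ 4 + 1) * k + 2 * b ^ 2 := by
    rw [show b ^ 4 = μ ^ 2 by rw [← hb]; ring, hb]; exact hposμ
  have hk1sq : 0 < (k - 1) ^ 2 := pow_pos (by linarith) 2
  -- denominators positive
  have hd1 : 0 < (a + b) ^ 2 + b ^ 2 := by nlinarith [sq_nonneg (a + b)]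
  have hd2 : 0 < (a * b + 1) ^ 2 + 1 := by positivity
  have hD1 : 0 < (a * k + b) ^ 2 + b ^ 2 := by nlinarith [sq_nonneg (a * k + b)]
  have hD2' : 0 < (a * b * k + 1) ^ 2 + 1 := by positivity
  have hn1 : 0 ≤ (a * b - 1) ^ 2 + 1 := by positivity
  have hn2 : 0 ≤ (a - b) ^ 2 + b ^ 2 := by positivity
  apply Real.sqrt_lt_sqrt
  · positivity
  · rw [div_mul_div_comm, div_mul_div_comm, div_lt_div_iff₀ (by positivity) (by positivity)]
    have hid : ((a * b * k - 1) ^ 2 + 1) * ((a * k - b) ^ 2 + b ^ 2) *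
          (((a + b) ^ 2 + b ^ 2) * ((a * b + 1) ^ 2 + 1)) -
        ((a * b - 1) ^ 2 + 1) * ((a - b) ^ 2 + b ^ 2) *
          (((a * k + b) ^ 2 + b ^ 2) * ((a * b * k + 1) ^ 2 + 1)) =
        32 * a * b * (b ^ 2 + 1) * (k - 1) ^ 2 *
          (2 * b ^ 2 * k ^ 2 - (b ^ 4 + 1) * k + 2 * b ^ 2) := by
      linear_combination ((-16)*a*b*k + (32)*a*b*k^2 + (-16)*a*b*k^3 + (16)*a*b^3 + (-64)*a*b^3*k + (96)*a*b^3*k^2 + (-80)*a*b^3*k^3 + (32)*a*b^3*k^4 + (16)*a*b^5 + (-64)*a*b^5*k + (96)*a*b^5*k^2 + (-80)*a*b^5*k^3 + (32)*a*b^5*k^4 + (-16)*a*b^7*k + (32)*a*b^7*k^2 + (-16)*a*b^7*k^3 + (8)*a^3*b*k^2 + (-8)*a^3*b*k^3 + (-8)*a^3*b^3*k + (24)*a^3*b^3*k^2 + (-32)*a^3*b^3*k^3 + (16)*a^3*b^3*k^4 + (-8)*a^3*b^5*k + (24)*a^3*b^5*k^2 + (-32)*a^3*b^5*k^3 + (16)*a^3*b^5*k^4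 + (8)*a^3*b^7*k^2 + (-8)*a^3*b^7*k^3 + (-4)*a^5*b^3*k^3 + (4)*a^5*b^3*k^4 + (-4)*a^5*b^5*k^3 + (4)*a^5*b^5*k^4) * ha
    have hprod : 0 < 32 * a * b * (b ^ 2 + 1) * (k - 1) ^ 2 *
        (2 * b ^ 2 * k ^ 2 - (b ^ 4 + 1) * k + 2 * b ^ 2) := by positivity
    linarith [hid, hprod]
end

section
/- Let μ > 0 and ω̃ > 0, and define the Version II convergence factor ρ(ω̃, q) = sqrt( ((q−ω̃)²+ω̃²)/((q+μω̃)²+μ²ω̃²) · ((q−ω̃)²+ω̃²)/((q+ω̃/μ)²+ω̃²/μ²) ) for q > 0. Then sign(∂ρ/∂q) = sign(q² − 2ω̃²) and sign(∂ρ/∂ω̃) = sign(2ω̃² − q²). -/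
private lemma sign_mul_pos' {c : ℝ} (hc : 0 < c) (y : ℝ) :
    Real.sign (y * c) = Real.sign y := by
  rcases lt_trichotomy y 0 with h | h | h
  · rw [Real.sign_of_neg h, Real.sign_of_neg (mul_neg_of_neg_of_pos h hc)]
  · simp [h]
  · rw [Real.sign_of_pos h, Real.sign_of_pos (mul_pos h hc)]

theorem stmt_12 (μ : ℝ) (hμ : 0 < μ) :
    ∀ ω q : ℝ, 0 < ω → 0 < q →
      (Real.sign (deriv (fun q : ℝ =>
          Real.sqrt (((q - ω) ^ 2 + ω ^ 2) / ((q + μ * ω) ^ 2 + μ ^ 2 * ω ^ 2) *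
            (((q - ω) ^ 2 + ω ^ 2) / ((q + ω / μ) ^ 2 + ω ^ 2 / μ ^ 2)))) q) =
        Real.sign (q ^ 2 - 2 * ω ^ 2)) ∧
      (Real.sign (deriv (fun ω : ℝ =>
          Real.sqrt (((q - ω) ^ 2 + ω ^ 2) / ((q + μ * ω) ^ 2 + μ ^ 2 * ω ^ 2) *
            (((q - ω) ^ 2 + ω ^ 2) / ((q + ω / μ) ^ 2 + ω ^ 2 / μ ^ 2)))) ω) =
        Real.sign (2 * ω ^ 2 - q ^ 2)) := by
  intro ω q hω hq
  have hμ' : μ ≠ 0 := hμ.ne'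
  have hA : (0:ℝ) < (q - ω) ^ 2 + ω ^ 2 := by positivity
  have hB : (0:ℝ) < (q + μ * ω) ^ 2 + μ ^ 2 * ω ^ 2 := by positivity
  have hC : (0:ℝ) < (q + ω / μ) ^ 2 + ω ^ 2 / μ ^ 2 := by positivity
  have hv : (0:ℝ) < ((q - ω) ^ 2 + ω ^ 2) / ((q + μ * ω) ^ 2 + μ ^ 2 * ω ^ 2) *
      (((q - ω) ^ 2 + ω ^ 2) / ((q + ω / μ) ^ 2 + ω ^ 2 / μ ^ 2)) := by positivity
  have hs : (0:ℝ) < Real.sqrt (((q - ω) ^ 2 + ω ^ 2) / ((q + μ * ω) ^ 2 + μ ^ 2 * ω ^ 2) *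
      (((q - ω) ^ 2 + ω ^ 2) / ((q + ω / μ) ^ 2 + ω ^ 2 / μ ^ 2))) := Real.sqrt_pos.mpr hv
  set s : ℝ := Real.sqrt (((q - ω) ^ 2 + ω ^ 2) / ((q + μ * ω) ^ 2 + μ ^ 2 * ω ^ 2) *
      (((q - ω) ^ 2 + ω ^ 2) / ((q + ω / μ) ^ 2 + ω ^ 2 / μ ^ 2))) with hsdef
  constructor
  · -- derivative in q
    have dA : HasDerivAt (fun x : ℝ => (x - ω) ^ 2 + ω ^ 2) (2 * (q - ω)) q := by
      have h := (((hasDerivAt_id q).sub_const ω).pow 2).add_const (ω ^ 2)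
      refine h.congr_deriv ?_
      simp only [id_eq]; push_cast; ring
    have dB : HasDerivAt (fun x : ℝ => (x + μ * ω) ^ 2 + μ ^ 2 * ω ^ 2)
        (2 * (q + μ * ω)) q := by
      have h := (((hasDerivAt_id q).add_const (μ * ω)).pow 2).add_const (μ ^ 2 * ω ^ 2)
      refine h.congr_deriv ?_
      simp only [id_eq]; push_cast; ring
    have dC : HasDerivAt (fun x : ℝ => (x + ω / μ) ^ 2 + ω ^ 2 / μ ^ 2)
        (2 * (q + ω / μ)) q := by
      have h := (((hasDerivAt_id q).add_const (ω / μ)).pow 2).add_const (ω ^ 2 / μ ^ 2)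
      refine h.congr_deriv ?_
      simp only [id_eq]; push_cast; ring
    have dH := (dA.div dB hB.ne').mul (dA.div dC hC.ne')
    have dS := dH.sqrt hv.ne'
    have hderiv := dS.deriv
    simp only [Pi.div_apply, Pi.mul_apply] at hderiv
    rw [hderiv]
    set c : ℝ := (2 * ω * μ * (1 + μ) ^ 2 * (q ^ 4 + 4 * ω ^ 4) +
        4 * q * ω ^ 2 * (1 - μ ^ 2) ^ 2 * ((q - ω) ^ 2 + ω ^ 2)) /
      (μ ^ 2 * ((q + μ * ω) ^ 2 + μ ^ 2 * ω ^ 2) ^ 2 *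
        ((q + ω / μ) ^ 2 + ω ^ 2 / μ ^ 2) ^ 2 * (2 * s)) with hcdef
    have hc : 0 < c := by rw [hcdef]; positivity
    have key : (2 * (q - ω) * ((q + μ * ω) ^ 2 + μ ^ 2 * ω ^ 2) -
          ((q - ω) ^ 2 + ω ^ 2) * (2 * (q + μ * ω))) /
            ((q + μ * ω) ^ 2 + μ ^ 2 * ω ^ 2) ^ 2 *
          (((q - ω) ^ 2 + ω ^ 2) / ((q + ω / μ) ^ 2 + ω ^ 2 / μ ^ 2)) +
        ((q - ω) ^ 2 + ω ^ 2) / ((q + μ * ω) ^ 2 + μ ^ 2 * ω ^ 2) *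
          ((2 * (q - ω) * ((q + ω / μ) ^ 2 + ω ^ 2 / μ ^ 2) -
            ((q - ω) ^ 2 + ω ^ 2) * (2 * (q + ω / μ))) /
              ((q + ω / μ) ^ 2 + ω ^ 2 / μ ^ 2) ^ 2) =
        (q ^ 2 - 2 * ω ^ 2) * (c * (2 * s)) := by
      rw [hcdef]
      field_simp
      ring
    rw [show (2 * (q - ω) * ((q + μ * ω) ^ 2 + μ ^ 2 * ω ^ 2) -
          ((q - ω) ^ 2 + ω ^ 2) * (2 * (q + μ * ω))) /
            ((q + μ * ω) ^ 2 + μ ^ 2 * ω ^ 2) ^ 2 *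
          (((q - ω) ^ 2 + ω ^ 2) / ((q + ω / μ) ^ 2 + ω ^ 2 / μ ^ 2)) +
        ((q - ω) ^ 2 + ω ^ 2) / ((q + μ * ω) ^ 2 + μ ^ 2 * ω ^ 2) *
          ((2 * (q - ω) * ((q + ω / μ) ^ 2 + ω ^ 2 / μ ^ 2) -
            ((q - ω) ^ 2 + ω ^ 2) * (2 * (q + ω / μ))) /
              ((q + ω / μ) ^ 2 + ω ^ 2 / μ ^ 2) ^ 2) = (q ^ 2 - 2 * ω ^ 2) * (c * (2 * s))
      from key]
    rw [mul_div_assoc, mul_div_assoc, div_self (by positivity : (2:ℝ) * s ≠ 0), mul_one]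
    exact sign_mul_pos' hc _
  · -- derivative in ω
    have dA : HasDerivAt (fun w : ℝ => (q - w) ^ 2 + w ^ 2)
        (2 * (q - ω) * (-1) + 2 * ω) ω := by
      have h := (((hasDerivAt_id ω).const_sub q).pow 2).add ((hasDerivAt_id ω).pow 2)
      refine h.congr_deriv ?_
      simp only [id_eq]; push_cast; ring
    have dB : HasDerivAt (fun w : ℝ => (q + μ * w) ^ 2 + μ ^ 2 * w ^ 2)
        (2 * (q + μ * ω) * μ + μ ^ 2 * (2 * ω)) ω := by
      have h := ((((hasDerivAt_id ω).const_mul μ).const_add q).pow 2).add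
        (((hasDerivAt_id ω).pow 2).const_mul (μ ^ 2))
      refine h.congr_deriv ?_
      simp only [id_eq]; push_cast; ring
    have dC : HasDerivAt (fun w : ℝ => (q + w / μ) ^ 2 + w ^ 2 / μ ^ 2)
        (2 * (q + ω / μ) * (1 / μ) + 2 * ω / μ ^ 2) ω := by
      have h := ((((hasDerivAt_id ω).div_const μ).const_add q).pow 2).add
        (((hasDerivAt_id ω).pow 2).div_const (μ ^ 2))
      refine h.congr_deriv ?_
      simp only [id_eq]; push_cast; ring
    have dH := (dA.div dB hB.ne').mul (dA.div dC hC.ne')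
    have dS := dH.sqrt hv.ne'
    have hderiv := dS.deriv
    simp only [Pi.div_apply, Pi.mul_apply] at hderiv
    rw [hderiv]
    set c : ℝ := (2 * q * μ * (1 + μ) ^ 2 * (q ^ 4 + 4 * ω ^ 4) +
        4 * q ^ 2 * ω * (1 - μ ^ 2) ^ 2 * ((q - ω) ^ 2 + ω ^ 2)) /
      (μ ^ 2 * ((q + μ * ω) ^ 2 + μ ^ 2 * ω ^ 2) ^ 2 *
        ((q + ω / μ) ^ 2 + ω ^ 2 / μ ^ 2) ^ 2 * (2 * s)) with hcdef
    have hc : 0 < c := by rw [hcdef]; positivity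
    have key : ((2 * (q - ω) * (-1) + 2 * ω) * ((q + μ * ω) ^ 2 + μ ^ 2 * ω ^ 2) -
          ((q - ω) ^ 2 + ω ^ 2) * (2 * (q + μ * ω) * μ + μ ^ 2 * (2 * ω))) /
            ((q + μ * ω) ^ 2 + μ ^ 2 * ω ^ 2) ^ 2 *
          (((q - ω) ^ 2 + ω ^ 2) / ((q + ω / μ) ^ 2 + ω ^ 2 / μ ^ 2)) +
        ((q - ω) ^ 2 + ω ^ 2) / ((q + μ * ω) ^ 2 + μ ^ 2 * ω ^ 2) *
          (((2 * (q - ω) * (-1) + 2 * ω) * ((q + ω / μ) ^ 2 + ω ^ 2 / μ ^ 2) -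
            ((q - ω) ^ 2 + ω ^ 2) * (2 * (q + ω / μ) * (1 / μ) + 2 * ω / μ ^ 2)) /
              ((q + ω / μ) ^ 2 + ω ^ 2 / μ ^ 2) ^ 2) =
        (2 * ω ^ 2 - q ^ 2) * (c * (2 * s)) := by
      rw [hcdef]
      field_simp
      ring
    rw [show ((2 * (q - ω) * (-1) + 2 * ω) * ((q + μ * ω) ^ 2 + μ ^ 2 * ω ^ 2) -
          ((q - ω) ^ 2 + ω ^ 2) * (2 * (q + μ * ω) * μ + μ ^ 2 * (2 * ω))) /
            ((q + μ * ω) ^ 2 + μ ^ 2 * ω ^ 2) ^ 2 *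
          (((q - ω) ^ 2 + ω ^ 2) / ((q + ω / μ) ^ 2 + ω ^ 2 / μ ^ 2)) +
        ((q - ω) ^ 2 + ω ^ 2) / ((q + μ * ω) ^ 2 + μ ^ 2 * ω ^ 2) *
          (((2 * (q - ω) * (-1) + 2 * ω) * ((q + ω / μ) ^ 2 + ω ^ 2 / μ ^ 2) -
            ((q - ω) ^ 2 + ω ^ 2) * (2 * (q + ω / μ) * (1 / μ) + 2 * ω / μ ^ 2)) /
              ((q + ω / μ) ^ 2 + ω ^ 2 / μ ^ 2) ^ 2) = (2 * ω ^ 2 - q ^ 2) * (c * (2 * s))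
      from key]
    rw [mul_div_assoc, mul_div_assoc, div_self (by positivity : (2:ℝ) * s ≠ 0), mul_one]
    exact sign_mul_pos' hc _
end

section
/- Let μ > 0 and 0 < ω̃₁ < ω̃₂, and let ρ(ω̃, q) be the Version II convergence factor ρ(ω̃, q) = ((q−ω̃)²+ω̃²) / sqrt( ((q+μω̃)²+μ²ω̃²)·((q+ω̃/μ)²+ω̃²/μ²) ). Then q* = sqrt(2 ω̃₁ ω̃₂) is the unique minimizer over q > 0 of max_{ω̃ ∈ [ω̃₁, ω̃₂]} ρ(ω̃, q), and it satisfies the equioscillation ρ(ω̃₁, q*) = ρ(ω̃₂, q*). -/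
noncomputable def Fc (c t : ℝ) : ℝ :=
  (2*t^2 - 2*t + 1)^2 / (4*t^4 + 4*c*t^3 + 2*c^2*t^2 + 2*c*t + 1)

lemma num1_pos (t : ℝ) : 0 < 2*t^2 - 2*t + 1 := by nlinarith [sq_nonneg (t-1), sq_nonneg t]

lemma den_pos (c t : ℝ) (hc : 2 ≤ c) (ht : 0 ≤ t) :
    0 < 4*t^4 + 4*c*t^3 + 2*c^2*t^2 + 2*c*t + 1 := by
  nlinarith [pow_nonneg ht 4, pow_nonneg ht 3, pow_nonneg ht 2]

lemma Fc_nonneg (c t : ℝ) (hc : 2 ≤ c) (ht : 0 ≤ t) : 0 ≤ Fc c t :=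
  div_nonneg (sq_nonneg _) (den_pos c t hc ht).le

lemma Fc_le_one (c t : ℝ) (hc : 2 ≤ c) (ht : 0 ≤ t) : Fc c t ≤ 1 := by
  rw [Fc, div_le_one (den_pos c t hc ht)]
  nlinarith [mul_nonneg (mul_nonneg ht ht) ht, mul_nonneg ht ht,
    mul_nonneg (show (0:ℝ) ≤ c^2 - 4 by nlinarith) (mul_nonneg ht ht)]

lemma Fc_hasDeriv (c t : ℝ) (hden : 4*t^4 + 4*c*t^3 + 2*c^2*t^2 + 2*c*t + 1 ≠ 0) :
    HasDerivAt (Fc c)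
      ((2*t^2 - 2*t + 1) * (2*(c+2)*(2*t^2-1)*(2*t^2+2*(c-1)*t+1)) /
        (4*t^4 + 4*c*t^3 + 2*c^2*t^2 + 2*c*t + 1)^2) t := by
  have h1 : HasDerivAt (fun x : ℝ => 2*x^2 - 2*x + 1) (4*t - 2) t := by
    have h := (((hasDerivAt_pow 2 t).const_mul (2:ℝ)).sub
      ((hasDerivAt_id t).const_mul (2:ℝ))).add_const (1:ℝ)
    refine h.congr_deriv ?_
    norm_num
    ring
  have hnum : HasDerivAt (fun x : ℝ => (2*x^2 - 2*x + 1)^2)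
      ((2:ℕ) * (2*t^2 - 2*t + 1)^(2-1) * (4*t - 2)) t := h1.pow 2
  have hden' : HasDerivAt (fun x : ℝ => 4*x^4 + 4*c*x^3 + 2*c^2*x^2 + 2*c*x + 1)
      (16*t^3 + 12*c*t^2 + 4*c^2*t + 2*c) t := by
    have h := (((((hasDerivAt_pow 4 t).const_mul (4:ℝ)).add
      ((hasDerivAt_pow 3 t).const_mul (4*c))).add
      ((hasDerivAt_pow 2 t).const_mul (2*c^2))).add
      ((hasDerivAt_id t).const_mul (2*c))).add_const (1:ℝ)
    refine h.congr_deriv ?_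
    norm_num
    ring
  have h := hnum.div hden' hden
  refine h.congr_deriv ?_
  rw [div_left_inj' (pow_ne_zero 2 hden)]
  norm_num
  ring

lemma Fc_anti (c : ℝ) (hc : 2 ≤ c) :
    StrictAntiOn (Fc c) (Set.Icc 0 (Real.sqrt (1/2))) := by
  apply strictAntiOn_of_deriv_neg (convex_Icc _ _)
  · apply ContinuousOn.div (by fun_prop) (by fun_prop)
    intro x hx
    exact (den_pos c x hc hx.1).ne'
  · intro x hx
    rw [interior_Icc] at hx
    have hx0 : 0 < x := hx.1
    have hx2 : 2*x^2 < 1 := by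
      have := (Real.lt_sqrt hx0.le).mp hx.2
      linarith
    have hd := (Fc_hasDeriv c x (den_pos c x hc hx0.le).ne').deriv
    rw [hd]
    apply div_neg_of_neg_of_pos _ (pow_pos (den_pos c x hc hx0.le) 2)
    have hN := num1_pos x
    have hC : 0 < 2*x^2 + 2*(c-1)*x + 1 := by nlinarith
    have hpos : 0 < (2*x^2 - 2*x + 1) * ((1 - 2*x^2) * (2*x^2 + 2*(c-1)*x + 1)) :=
      mul_pos hN (mul_pos (by linarith) hC)
    nlinarith [hpos]

lemma Fc_sym (c t : ℝ) (hc : 2 ≤ c) (ht : 0 < t) : Fc c (1/(2*t)) = Fc c t := by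
  have h1 := (den_pos c t hc ht.le).ne'
  have h2 := (den_pos c (1/(2*t)) hc (by positivity)).ne'
  rw [Fc, Fc, div_eq_div_iff h2 h1]
  field_simp
  ring

lemma rho_eq (μ ω q : ℝ) (hμ : 0 < μ) (hω : 0 < ω) (hq : 0 < q) :
    ((q - ω) ^ 2 + ω ^ 2) /
      Real.sqrt (((q + μ * ω) ^ 2 + μ ^ 2 * ω ^ 2) * ((q + ω / μ) ^ 2 + ω ^ 2 / μ ^ 2))
    = Real.sqrt (Fc (μ + μ⁻¹) (ω / q)) := by
  set c := μ + μ⁻¹ with hcdef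
  have hc : 2 ≤ c := by
    rw [hcdef, show μ + μ⁻¹ = (μ^2+1)/μ by field_simp, le_div_iff₀ hμ]
    nlinarith [sq_nonneg (μ-1)]
  have ht : 0 < ω / q := div_pos hω hq
  have hD : ((q + μ * ω) ^ 2 + μ ^ 2 * ω ^ 2) * ((q + ω / μ) ^ 2 + ω ^ 2 / μ ^ 2)
      = (q^2)^2 * (4*(ω/q)^4 + 4*c*(ω/q)^3 + 2*c^2*(ω/q)^2 + 2*c*(ω/q) + 1) := by
    rw [hcdef]
    field_simp
    ring
  have hN : (q - ω)^2 + ω^2 = q^2 * (2*(ω/q)^2 - 2*(ω/q) + 1) := by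
    field_simp
    ring
  rw [hD, hN, Real.sqrt_mul (sq_nonneg _), Real.sqrt_sq (sq_nonneg q),
    Fc, Real.sqrt_div (sq_nonneg _), Real.sqrt_sq (num1_pos _).le,
    ← div_div]
  congr 1
  field_simp

lemma Fc_lt_left (c : ℝ) (hc : 2 ≤ c) {u t : ℝ} (hu : 0 < u) (hut : u < t)
    (hts : t ≤ Real.sqrt (1/2)) : Fc c t < Fc c u :=
  (Fc_anti c hc) ⟨hu.le, (hut.le.trans hts)⟩ ⟨(hu.trans hut).le, hts⟩ hut

lemma Fc_lt_right (c : ℝ) (hc : 2 ≤ c) {t v : ℝ} (ht : 0 < t)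
    (hts : t ≤ Real.sqrt (1/2)) (hv : 1/(2*t) < v) : Fc c t < Fc c v := by
  have hv0 : 0 < v := lt_trans (by positivity) hv
  rw [← Fc_sym c v hc hv0]
  apply Fc_lt_left c hc (by positivity) ?_ hts
  rw [div_lt_iff₀ (by positivity)]
  have h1 : 1 < v * (2*t) := (div_lt_iff₀ (by positivity)).mp hv
  nlinarith

lemma Fc_interval (c : ℝ) (hc : 2 ≤ c) {a t : ℝ} (ha : 0 < a)
    (has : a ≤ Real.sqrt (1/2)) (hl : a ≤ t) (hu : t ≤ 1/(2*a)) :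
    Fc c t ≤ Fc c a := by
  have hs0 : 0 < Real.sqrt (1/2) := Real.sqrt_pos.mpr (by norm_num)
  have hs2 : Real.sqrt (1/2) ^ 2 = 1/2 := Real.sq_sqrt (by norm_num)
  have ht0 : 0 < t := lt_of_lt_of_le ha hl
  have hanti := (Fc_anti c hc).antitoneOn
  rcases le_or_gt t (Real.sqrt (1/2)) with h | h
  · exact hanti ⟨ha.le, has⟩ ⟨ht0.le, h⟩ hl
  · rw [← Fc_sym c t hc ht0]
    have hu0 : (0:ℝ) < 1/(2*t) := by positivity
    have hus : 1/(2*t) ≤ Real.sqrt (1/2) := by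
      rw [div_le_iff₀ (by positivity)]
      nlinarith
    have hau : a ≤ 1/(2*t) := by
      rw [le_div_iff₀ (by positivity)]
      have h1 : t * (2*a) ≤ 1 := (le_div_iff₀ (by positivity)).mp hu
      nlinarith
    exact hanti ⟨ha.le, has⟩ ⟨hu0.le, hus⟩ hau

theorem stmt_13 (μ ω₁ ω₂ : ℝ) (hμ : 0 < μ) (h1 : 0 < ω₁) (h12 : ω₁ < ω₂) :
    let ρ : ℝ → ℝ → ℝ := fun ω q =>
      ((q - ω) ^ 2 + ω ^ 2) /
        Real.sqrt (((q + μ * ω) ^ 2 + μ ^ 2 * ω ^ 2) * ((q + ω / μ) ^ 2 + ω ^ 2 / μ ^ 2))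
    let qs := Real.sqrt (2 * ω₁ * ω₂)
    ρ ω₁ qs = ρ ω₂ qs ∧
    ∀ q : ℝ, 0 < q → q ≠ qs →
      sSup ((fun ω => ρ ω qs) '' Set.Icc ω₁ ω₂) <
        sSup ((fun ω => ρ ω q) '' Set.Icc ω₁ ω₂) := by
  intro ρ qs
  have h2 : 0 < ω₂ := h1.trans h12
  set c := μ + μ⁻¹ with hcdef
  have hc : 2 ≤ c := by
    rw [hcdef, show μ + μ⁻¹ = (μ^2+1)/μ by field_simp, le_div_iff₀ hμ]
    nlinarith [sq_nonneg (μ-1)]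
  have hρ : ∀ ω q : ℝ, 0 < ω → 0 < q → ρ ω q = Real.sqrt (Fc c (ω / q)) :=
    fun ω q hω hq => rho_eq μ ω q hμ hω hq
  have hqs : 0 < qs := Real.sqrt_pos.mpr (by positivity)
  have hqs2 : qs ^ 2 = 2 * ω₁ * ω₂ := Real.sq_sqrt (by positivity)
  have ht₁ : 0 < ω₁ / qs := div_pos h1 hqs
  have ht₂ : 0 < ω₂ / qs := div_pos h2 hqs
  have ht12 : ω₁ / qs < ω₂ / qs := by gcongr
  have hprod : 2 * (ω₁ / qs) * (ω₂ / qs) = 1 := by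
    field_simp
    linarith [hqs2]
  have ht₂eq : ω₂ / qs = 1 / (2 * (ω₁ / qs)) := by
    rw [eq_div_iff (by positivity)]
    linear_combination hprod
  have ht₁lt : ω₁ / qs ≤ Real.sqrt (1/2) := by
    apply le_of_lt
    apply (Real.lt_sqrt ht₁.le).mpr
    nlinarith
  have hmem1 : ω₁ ∈ Set.Icc ω₁ ω₂ := ⟨le_refl _, h12.le⟩
  have hmem2 : ω₂ ∈ Set.Icc ω₁ ω₂ := ⟨h12.le, le_refl _⟩
  have hρub : ∀ ω ∈ Set.Icc ω₁ ω₂, ρ ω qs ≤ ρ ω₁ qs := by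
    intro ω hω
    have hω0 : 0 < ω := lt_of_lt_of_le h1 hω.1
    rw [hρ ω qs hω0 hqs, hρ ω₁ qs h1 hqs]
    apply Real.sqrt_le_sqrt
    apply Fc_interval c hc ht₁ ht₁lt (by gcongr; exact hω.1)
    rw [← ht₂eq]
    gcongr
    exact hω.2
  have hsup : sSup ((fun ω => ρ ω qs) '' Set.Icc ω₁ ω₂) = ρ ω₁ qs := by
    apply le_antisymm
    · have hne : ((fun ω => ρ ω qs) '' Set.Icc ω₁ ω₂).Nonempty :=
        ⟨ρ ω₁ qs, ⟨ω₁, hmem1, rfl⟩⟩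
      apply csSup_le hne
      rintro x ⟨ω, hω, rfl⟩
      exact hρub ω hω
    · refine le_csSup ⟨ρ ω₁ qs, ?_⟩ ⟨ω₁, hmem1, rfl⟩
      rintro x ⟨ω, hω, rfl⟩
      exact hρub ω hω
  constructor
  · rw [hρ ω₁ qs h1 hqs, hρ ω₂ qs h2 hqs]
    congr 1
    rw [ht₂eq, Fc_sym c (ω₁/qs) hc ht₁]
  · intro q hq hqne
    have hbddq : BddAbove ((fun ω => ρ ω q) '' Set.Icc ω₁ ω₂) := by
      refine ⟨1, ?_⟩
      rintro x ⟨ω, hω, rfl⟩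
      have hω0 : 0 < ω := lt_of_lt_of_le h1 hω.1
      show ρ ω q ≤ 1
      rw [hρ ω q hω0 hq, show (1:ℝ) = Real.sqrt 1 by simp]
      exact Real.sqrt_le_sqrt (Fc_le_one c _ hc (by positivity))
    rw [hsup]
    have key : ∃ ω ∈ Set.Icc ω₁ ω₂, ρ ω₁ qs < ρ ω q := by
      rcases lt_or_gt_of_ne hqne with hlt | hgt
      · refine ⟨ω₂, hmem2, ?_⟩
        rw [hρ ω₁ qs h1 hqs, hρ ω₂ q h2 hq]
        apply Real.sqrt_lt_sqrt (Fc_nonneg c _ hc ht₁.le)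
        apply Fc_lt_right c hc ht₁ ht₁lt
        rw [← ht₂eq]
        gcongr
      · refine ⟨ω₁, hmem1, ?_⟩
        rw [hρ ω₁ qs h1 hqs, hρ ω₁ q h1 hq]
        apply Real.sqrt_lt_sqrt (Fc_nonneg c _ hc ht₁.le)
        apply Fc_lt_left c hc (div_pos h1 hq) ?_ ht₁lt
        gcongr
    obtain ⟨ω, hω, hlt⟩ := key
    exact lt_of_lt_of_le hlt (le_csSup hbddq ⟨ω, hω, rfl⟩)
end

section
/- Let μ > 1, ω̃ > 0, and consider the Version III convergence factor ρ(ω̃, p, q) = sqrt( ((p−ω̃)²+ω̃²)/((p+μω̃)²+μ²ω̃²) · ((q−ω̃)²+ω̃²)/((q+ω̃/μ)²+ω̃²/μ²) ) for p, q > 0. If p > q, then ρ(ω̃, p, q) > ρ(ω̃, q, p); i.e., sign(ρ(ω̃,p,q)² − ρ(ω̃,q,p)²) = sign((μ−1)(p−q)). -/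
theorem stmt_14 (μ ω p q : ℝ) (hμ : 1 < μ) (hω : 0 < ω) (hp : 0 < p) (hq : 0 < q)
    (hpq : q < p) :
    let ρ : ℝ → ℝ → ℝ := fun a b =>
      Real.sqrt (((a - ω) ^ 2 + ω ^ 2) / ((a + μ * ω) ^ 2 + μ ^ 2 * ω ^ 2) *
        (((b - ω) ^ 2 + ω ^ 2) / ((b + ω / μ) ^ 2 + ω ^ 2 / μ ^ 2)))
    ρ p q > ρ q p ∧
    Real.sign ((ρ p q) ^ 2 - (ρ q p) ^ 2) = Real.sign ((μ - 1) * (p - q)) := by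
  intro ρ
  have hμ0 : 0 < μ := by linarith
  have hμne : μ ≠ 0 := ne_of_gt hμ0
  have hY0 : 0 ≤ ((q - ω) ^ 2 + ω ^ 2) / ((q + μ * ω) ^ 2 + μ ^ 2 * ω ^ 2) *
      (((p - ω) ^ 2 + ω ^ 2) / ((p + ω / μ) ^ 2 + ω ^ 2 / μ ^ 2)) := by positivity
  have hX0 : 0 ≤ ((p - ω) ^ 2 + ω ^ 2) / ((p + μ * ω) ^ 2 + μ ^ 2 * ω ^ 2) *
      (((q - ω) ^ 2 + ω ^ 2) / ((q + ω / μ) ^ 2 + ω ^ 2 / μ ^ 2)) := by positivity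
  have hlt : ((q - ω) ^ 2 + ω ^ 2) / ((q + μ * ω) ^ 2 + μ ^ 2 * ω ^ 2) *
      (((p - ω) ^ 2 + ω ^ 2) / ((p + ω / μ) ^ 2 + ω ^ 2 / μ ^ 2)) <
      ((p - ω) ^ 2 + ω ^ 2) / ((p + μ * ω) ^ 2 + μ ^ 2 * ω ^ 2) *
      (((q - ω) ^ 2 + ω ^ 2) / ((q + ω / μ) ^ 2 + ω ^ 2 / μ ^ 2)) := by
    rw [div_mul_div_comm, div_mul_div_comm,
      div_lt_div_iff₀ (by positivity) (by positivity)]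
    have hkey : 0 < 2 * ω * (p - q) * (μ ^ 2 - 1) *
        (μ * p * q + ω * (p + q) * (μ ^ 2 + 1) + 2 * μ * ω ^ 2) := by
      have h1 : 0 < μ ^ 2 - 1 := by nlinarith
      have h2 : 0 < μ * p * q + ω * (p + q) * (μ ^ 2 + 1) + 2 * μ * ω ^ 2 := by
        positivity
      have h3 : 0 < p - q := by linarith
      positivity
    have hN : 0 < ((p - ω) ^ 2 + ω ^ 2) * ((q - ω) ^ 2 + ω ^ 2) := by positivity
    have hμ2 : 0 < μ ^ 2 := by positivity
    have habq : ((q + ω / μ) ^ 2 + ω ^ 2 / μ ^ 2) = ((μ * q + ω) ^ 2 + ω ^ 2) / μ ^ 2 := by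
      field_simp
    have habp : ((p + ω / μ) ^ 2 + ω ^ 2 / μ ^ 2) = ((μ * p + ω) ^ 2 + ω ^ 2) / μ ^ 2 := by
      field_simp
    rw [habq, habp]
    rw [← mul_div_assoc, ← mul_div_assoc, ← mul_div_assoc, ← mul_div_assoc,
      div_lt_div_iff₀ hμ2 hμ2]
    have hid : ((p - ω) ^ 2 + ω ^ 2) * ((q - ω) ^ 2 + ω ^ 2) *
          (((q + μ * ω) ^ 2 + μ ^ 2 * ω ^ 2) * ((μ * p + ω) ^ 2 + ω ^ 2)) * μ ^ 2 -
        ((q - ω) ^ 2 + ω ^ 2) * ((p - ω) ^ 2 + ω ^ 2) *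
          (((p + μ * ω) ^ 2 + μ ^ 2 * ω ^ 2) * ((μ * q + ω) ^ 2 + ω ^ 2)) * μ ^ 2 =
        μ ^ 2 * (((p - ω) ^ 2 + ω ^ 2) * ((q - ω) ^ 2 + ω ^ 2)) *
          (2 * ω * (p - q) * (μ ^ 2 - 1) *
            (μ * p * q + ω * (p + q) * (μ ^ 2 + 1) + 2 * μ * ω ^ 2)) := by ring
    have hpos := mul_pos hμ2 (mul_pos hN hkey)
    linarith [hid, hpos]
  have hsqrt : ρ q p < ρ p q := Real.sqrt_lt_sqrt hY0 hlt
  refine ⟨hsqrt, ?_⟩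
  have hsqX : (ρ p q) ^ 2 = _ := Real.sq_sqrt hX0
  have hsqY : (ρ q p) ^ 2 = _ := Real.sq_sqrt hY0
  have hpos : 0 < (ρ p q) ^ 2 - (ρ q p) ^ 2 := by
    rw [hsqX, hsqY]; linarith
  have hpos2 : 0 < (μ - 1) * (p - q) := by
    have : 0 < μ - 1 := by linarith
    have : 0 < p - q := by linarith
    nlinarith
  rw [Real.sign_of_pos hpos, Real.sign_of_pos hpos2]
end
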